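/- arXiv:2103.14836 — 4 statements merged into one kernel-verified Lean document; each statement's English description precedes it below -/
import Mathlib

section
/- Fix L ∈ (0,1], ε > 0, θ ∈ (0, π/4], and define recursively γ₁ = (1+ε)(1-cos θ)/(L sin θ) and, as long as γ_{k-1} ∈ (0,1), γ_k = (1+ε)(2^{k-1} - cos θ ∏_{j=1}^{k-1}(1+√(1-γ_j²)))/(L sin θ). Then whenever γ₁,…,γ_k are all in (0,1), the sequence is strictly increasing: γ₁ < γ₂ < ⋯ < γ_k. -/
/-!
Writing `P_n = ∏_{j=1}^{n} (1 + √(1 - γ_j²))`, the difference `γ_{n+2} - γ_{n+1}` is the positive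
multiple `(1 + ε) / (L sin θ)` of `2^n - cos θ · P_n · √(1 - γ_{n+1}²)`. Each factor of `P_n` lies
in `[1, 2]`, so `0 < P_n ≤ 2^n`, and `√(1 - γ_{n+1}²) < 1` because `γ_{n+1} ≠ 0`; with `cos θ ≤ 1`
the subtracted term is below `2^n`.
-/

open Real Finset

noncomputable def sharpnessProd (γ : ℕ → ℝ) (n : ℕ) : ℝ :=
  ∏ j ∈ Icc 1 n, (1 + √(1 - γ j ^ 2))

lemma sqrt_one_sub_sq_le_one (x : ℝ) : √(1 - x ^ 2) ≤ 1 :=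
  sqrt_le_one.mpr (by nlinarith [sq_nonneg x])

lemma sqrt_one_sub_sq_lt_one {x : ℝ} (hx : x ≠ 0) : √(1 - x ^ 2) < 1 :=
  (sqrt_lt' one_pos).mpr (by linarith [sq_pos_of_ne_zero hx])

namespace sharpnessProd

variable (γ : ℕ → ℝ) (n : ℕ)

lemma succ : sharpnessProd γ (n + 1) = sharpnessProd γ n * (1 + √(1 - γ (n + 1) ^ 2)) :=
  prod_Icc_succ_top (by omega) _

lemma pos : 0 < sharpnessProd γ n :=
  prod_pos fun j _ => by positivity

lemma le_two_pow : sharpnessProd γ n ≤ 2 ^ n :=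
  calc sharpnessProd γ n ≤ ∏ _j ∈ Icc 1 n, (2 : ℝ) :=
        prod_le_prod (fun j _ => by positivity)
          (fun j _ => by linarith [sqrt_one_sub_sq_le_one (γ j)])
    _ = 2 ^ n := by simp

variable {γ n}

lemma mul_mul_sqrt_lt_two_pow {a : ℝ} (ha : a ≤ 1) (hγ : γ (n + 1) ≠ 0) :
    a * (sharpnessProd γ n * √(1 - γ (n + 1) ^ 2)) < 2 ^ n := by
  have hP := pos γ n
  calc a * (sharpnessProd γ n * √(1 - γ (n + 1) ^ 2))
      ≤ sharpnessProd γ n * √(1 - γ (n + 1) ^ 2) :=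
        mul_le_of_le_one_left (by positivity) ha
    _ < sharpnessProd γ n := mul_lt_of_lt_one_right hP (sqrt_one_sub_sq_lt_one hγ)
    _ ≤ 2 ^ n := le_two_pow γ n

lemma two_pow_sub_mul_lt_succ {a : ℝ} (ha : a ≤ 1) (hγ : γ (n + 1) ≠ 0) :
    2 ^ n - a * sharpnessProd γ n < 2 ^ (n + 1) - a * sharpnessProd γ (n + 1) := by
  rw [succ, pow_succ]
  linarith [mul_mul_sqrt_lt_two_pow ha hγ]

end sharpnessProd

theorem gamma_sequence_strict_increasing_general
    (L ε θ : ℝ) (hL0 : 0 < L) (hε : 0 < ε)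
    (hθ : θ ∈ Set.Ioc 0 (π / 4))
    (k : ℕ) (γ : ℕ → ℝ)
    (h1 : γ 1 = (1 + ε) * (1 - Real.cos θ) / (L * Real.sin θ))
    (hrec : ∀ m, 2 ≤ m → m ≤ k →
      γ m = (1 + ε) *
        ((2 : ℝ) ^ (m - 1) -
          Real.cos θ * ∏ j ∈ Finset.Icc 1 (m - 1), (1 + Real.sqrt (1 - γ j ^ 2))) /
        (L * Real.sin θ))
    (hIoo : ∀ m, 1 ≤ m → m ≤ k → γ m ∈ Set.Ioo (0 : ℝ) 1) :
    ∀ m, 1 ≤ m → m < k → γ m < γ (m + 1) := by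
  have hformula : ∀ n, n + 1 ≤ k →
      γ (n + 1) = (1 + ε) * (2 ^ n - cos θ * sharpnessProd γ n) / (L * sin θ) := by
    rintro (_ | n) hn
    · simpa [sharpnessProd] using h1
    · exact hrec (n + 2) (by omega) hn
  have hsin : 0 < sin θ := sin_pos_of_pos_of_lt_pi hθ.1 (by linarith [hθ.2, pi_pos])
  intro m hm hmk
  obtain ⟨n, rfl⟩ := Nat.exists_eq_add_of_le' hm
  have hγ : γ (n + 1) ≠ 0 := (hIoo (n + 1) hm hmk.le).1.ne'
  rw [hformula n hmk.le, hformula (n + 1) hmk]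
  gcongr ?_ / _
  exact mul_lt_mul_of_pos_left
    (sharpnessProd.two_pow_sub_mul_lt_succ (cos_le_one θ) hγ) (by linarith)

/-- The recursively defined sharpness sequence
`γ₁ = (1+ε)(1-cos θ)/(L sin θ)`,
`γ_m = (1+ε)(2^{m-1} - cos θ ∏_{j=1}^{m-1}(1+√(1-γ_j²)))/(L sin θ)` for `2 ≤ m`,
is strictly increasing as long as all its terms lie in `(0,1)`. -/
theorem gamma_sequence_strict_increasing
    (L ε θ : ℝ) (hL0 : 0 < L) (hL1 : L ≤ 1) (hε : 0 < ε)
    (hθ : θ ∈ Set.Ioc 0 (π / 4))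
    (k : ℕ) (γ : ℕ → ℝ)
    (h1 : γ 1 = (1 + ε) * (1 - Real.cos θ) / (L * Real.sin θ))
    (hrec : ∀ m, 2 ≤ m → m ≤ k →
      γ m = (1 + ε) *
        ((2 : ℝ) ^ (m - 1) -
          Real.cos θ * ∏ j ∈ Finset.Icc 1 (m - 1), (1 + Real.sqrt (1 - γ j ^ 2))) /
        (L * Real.sin θ))
    (hIoo : ∀ m, 1 ≤ m → m ≤ k → γ m ∈ Set.Ioo (0 : ℝ) 1) :
    ∀ m, 1 ≤ m → m < k → γ m < γ (m + 1) :=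
  gamma_sequence_strict_increasing_general L ε θ hL0 hε hθ k γ h1 hrec hIoo
end

section
/- Fix L ∈ (0,1] and ε > 0, and define the recursive sequence γ_k(θ) as: γ₁(θ) = (1+ε)(1-cos θ)/(L sin θ), and γ_k(θ) = (1+ε)(2^{k-1} - cos θ ∏_{j=1}^{k-1}(1+√(1-γ_j(θ)²)))/(L sin θ) when all previous terms lie in (0,1). Then for every n ∈ ℕ, lim_{θ→0⁺} γ_n(θ) = 0. -/
/-!
Every `γ_j` is eventually `O(sin θ)` as `θ → 0⁺`, by induction on `j`. Since `1 - cos θ ≤ sin² θ`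
and `1 + √(1 - x²) ≥ 2 - x²`, the Weierstrass product inequality gives
`2ⁿ - cos θ ∏ (1 + √(1 - γ_j²)) ≤ 2ⁿ (sin² θ + ∑ γ_j²)`, which is `O(sin² θ)` when the earlier
`γ_j` are `O(sin θ)`; dividing by `L sin θ` makes `γ_{n+1}` again `O(sin θ)`. For small `θ` these
bounds also keep the earlier terms in `(0, 1)`, so the recursion applies.
-/

open Real Filter Finset Topology

theorem Finset.one_sub_sum_le_prod_one_sub {ι R : Type*} [CommRing R] [LinearOrder R]
    [IsStrictOrderedRing R] (s : Finset ι) (f : ι → R) (hf : ∀ i ∈ s, 0 ≤ f i ∧ f i ≤ 1) :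
    1 - ∑ i ∈ s, f i ≤ ∏ i ∈ s, (1 - f i) := by
  classical
  induction s using Finset.induction_on with
  | empty => simp
  | insert a s ha ih =>
    obtain ⟨hfa₀, hfa₁⟩ := hf a (mem_insert_self a s)
    have hf' : ∀ i ∈ s, 0 ≤ f i ∧ f i ≤ 1 := fun i hi ↦ hf i (mem_insert_of_mem hi)
    have hsum : 0 ≤ ∑ i ∈ s, f i := sum_nonneg fun i hi ↦ (hf' i hi).1
    rw [sum_insert ha, prod_insert ha]
    nlinarith [ih hf', mul_nonneg hfa₀ hsum]

namespace Real

theorem two_sub_sq_le_one_add_sqrt_one_sub_sq {x : ℝ} (hx : x ^ 2 ≤ 1) :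
    2 - x ^ 2 ≤ 1 + √(1 - x ^ 2) := by
  have : 1 - x ^ 2 ≤ √(1 - x ^ 2) :=
    (le_sqrt (by linarith) (by linarith)).2 (by nlinarith [sq_nonneg x])
  linarith

theorem prod_one_add_sqrt_one_sub_sq_le {ι : Type*} (s : Finset ι) (x : ι → ℝ) :
    ∏ j ∈ s, (1 + √(1 - x j ^ 2)) ≤ 2 ^ #s := by
  rw [← prod_const]
  refine prod_le_prod (fun j _ ↦ by positivity) fun j _ ↦ ?_
  have : √(1 - x j ^ 2) ≤ 1 := sqrt_le_one.2 (by nlinarith [sq_nonneg (x j)])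
  linarith

theorem pow_mul_one_sub_sum_le_prod_one_add_sqrt {ι : Type*} (s : Finset ι) (x : ι → ℝ)
    (hx : ∀ j ∈ s, x j ^ 2 ≤ 1) :
    2 ^ #s * (1 - (∑ j ∈ s, x j ^ 2) / 2) ≤ ∏ j ∈ s, (1 + √(1 - x j ^ 2)) :=
  calc 2 ^ #s * (1 - (∑ j ∈ s, x j ^ 2) / 2)
      ≤ 2 ^ #s * ∏ j ∈ s, (1 - x j ^ 2 / 2) := by
        rw [sum_div]
        gcongr
        exact one_sub_sum_le_prod_one_sub s _ fun j hj ↦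
          ⟨by positivity, by linarith [hx j hj]⟩
    _ = ∏ j ∈ s, (2 - x j ^ 2) := by
        rw [← prod_const, ← prod_mul_distrib]
        exact prod_congr rfl fun j _ ↦ by ring
    _ ≤ ∏ j ∈ s, (1 + √(1 - x j ^ 2)) :=
        prod_le_prod (fun j hj ↦ by linarith [hx j hj])
          fun j hj ↦ two_sub_sq_le_one_add_sqrt_one_sub_sq (hx j hj)

theorem tendsto_const_mul_sin_nhdsGT_zero (C : ℝ) :
    Tendsto (fun θ ↦ C * sin θ) (𝓝[>] 0) (𝓝 0) := by
  simpa using ((continuous_sin.tendsto 0).mono_left nhdsWithin_le_nhds).const_mul C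

theorem one_sub_cos_le_sin_sq {θ : ℝ} (hθ : 0 ≤ cos θ) : 1 - cos θ ≤ sin θ ^ 2 := by
  nlinarith [sin_sq_add_cos_sq θ, cos_le_one θ]

theorem pow_sub_cos_mul_prod_pos {ι : Type*} (s : Finset ι) (x : ι → ℝ) {θ : ℝ}
    (hc₀ : 0 ≤ cos θ) (hc₁ : cos θ < 1) :
    0 < 2 ^ #s - cos θ * ∏ j ∈ s, (1 + √(1 - x j ^ 2)) := by
  have hprod := prod_one_add_sqrt_one_sub_sq_le s x
  have hpow : (0 : ℝ) < 2 ^ #s := by positivity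
  nlinarith [mul_le_mul_of_nonneg_left hprod hc₀]

theorem pow_sub_cos_mul_prod_le {ι : Type*} (s : Finset ι) (x : ι → ℝ) {θ : ℝ}
    (hc : 0 ≤ cos θ) (hx : ∀ j ∈ s, x j ^ 2 ≤ 1) :
    2 ^ #s - cos θ * ∏ j ∈ s, (1 + √(1 - x j ^ 2)) ≤
      2 ^ #s * (sin θ ^ 2 + ∑ j ∈ s, x j ^ 2) := by
  have hprod := pow_mul_one_sub_sum_le_prod_one_add_sqrt s x hx
  have hsum : 0 ≤ ∑ j ∈ s, x j ^ 2 := by positivity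
  have hpow : (0 : ℝ) ≤ 2 ^ #s := by positivity
  nlinarith [one_sub_cos_le_sin_sq hc, cos_le_one θ, mul_le_mul_of_nonneg_left hprod hc,
    mul_nonneg hpow hsum, mul_nonneg (mul_nonneg hpow hsum) (sub_nonneg.2 (cos_le_one θ))]

end Real

theorem mul_pow_sub_cos_mul_prod_div_mem_Ioc {ι : Type*} (s : Finset ι) (x : ι → ℝ)
    {a L C θ : ℝ} (ha : 0 < a) (hL : 0 < L) (hs : 0 < sin θ) (hc₀ : 0 ≤ cos θ)
    (hc₁ : cos θ < 1) (hx : ∀ j ∈ s, |x j| ≤ C * sin θ) (hCs : C * sin θ ≤ 1) :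
    a * (2 ^ #s - cos θ * ∏ j ∈ s, (1 + √(1 - x j ^ 2))) / (L * sin θ) ∈
      Set.Ioc 0 (a * 2 ^ #s * (1 + #s * C ^ 2) / L * sin θ) := by
  have hsq : ∀ j ∈ s, x j ^ 2 ≤ (C * sin θ) ^ 2 := fun j hj ↦ sq_le_sq.2 <|
    (hx j hj).trans (le_abs_self _)
  have hsum : ∑ j ∈ s, x j ^ 2 ≤ #s * (C * sin θ) ^ 2 := by
    simpa using sum_le_card_nsmul s _ _ hsq
  have hnum := pow_sub_cos_mul_prod_le s x hc₀ fun j hj ↦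
    (hsq j hj).trans (pow_le_one₀ ((abs_nonneg _).trans (hx j hj)) hCs)
  refine ⟨by have := pow_sub_cos_mul_prod_pos s x hc₀ hc₁; positivity, ?_⟩
  rw [div_le_iff₀ (by positivity)]
  calc a * (2 ^ #s - cos θ * ∏ j ∈ s, (1 + √(1 - x j ^ 2)))
      ≤ a * (2 ^ #s * (sin θ ^ 2 + #s * (C * sin θ) ^ 2)) := by
        gcongr
        exact hnum.trans (by gcongr)
    _ = a * 2 ^ #s * (1 + #s * C ^ 2) / L * sin θ * (L * sin θ) := by field_simp

section Gamma

variable {L ε : ℝ} {g : ℕ → ℝ → ℝ}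

theorem gamma_succ_eq
    (h1 : ∀ θ ∈ Set.Ioc 0 (π / 4), g 1 θ = (1 + ε) * (1 - cos θ) / (L * sin θ))
    (hrec : ∀ n, 2 ≤ n → ∀ θ ∈ Set.Ioc 0 (π / 4),
      (∀ j, 1 ≤ j → j < n → g j θ ∈ Set.Ioo 0 1) →
      g n θ = (1 + ε) *
        (2 ^ (n - 1) - cos θ * ∏ j ∈ Icc 1 (n - 1), (1 + √(1 - g j θ ^ 2))) / (L * sin θ))
    (n : ℕ) (θ : ℝ) (hθ : θ ∈ Set.Ioc 0 (π / 4)) (hg : ∀ j ∈ Icc 1 n, g j θ ∈ Set.Ioo 0 1) :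
    g (n + 1) θ =
      (1 + ε) * (2 ^ n - cos θ * ∏ j ∈ Icc 1 n, (1 + √(1 - g j θ ^ 2))) / (L * sin θ) := by
  rcases Nat.eq_zero_or_pos n with rfl | hn
  · simpa using h1 θ hθ
  · exact hrec (n + 1) (by omega) θ hθ fun j hj₁ hjn ↦ hg j (mem_Icc.2 ⟨hj₁, by omega⟩)

theorem exists_forall_eventually_gamma_mem_Ioc (hL : 0 < L) (hε : 0 < 1 + ε)
    (hg : ∀ n, ∀ θ ∈ Set.Ioc 0 (π / 4), (∀ j ∈ Icc 1 n, g j θ ∈ Set.Ioo 0 1) →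
      g (n + 1) θ =
        (1 + ε) * (2 ^ n - cos θ * ∏ j ∈ Icc 1 n, (1 + √(1 - g j θ ^ 2))) / (L * sin θ))
    (m : ℕ) : ∃ C, ∀ᶠ θ in 𝓝[>] 0, ∀ j ∈ Icc 1 m, g j θ ∈ Set.Ioc 0 (C * sin θ) := by
  induction m with
  | zero => exact ⟨0, by simp⟩
  | succ m ih =>
    obtain ⟨C, hC⟩ := ih
    set K := (1 + ε) * 2 ^ m * (1 + m * C ^ 2) / L
    refine ⟨max C K, ?_⟩
    filter_upwards [hC, Ioc_mem_nhdsGT (by positivity : (0 : ℝ) < π / 4),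
      (tendsto_const_mul_sin_nhdsGT_zero C).eventually_lt_const one_pos] with θ hCθ hθ hCs j hj
    have hs : 0 < sin θ := sin_pos_of_pos_of_lt_pi hθ.1 (by linarith [hθ.2, pi_pos])
    have hc₀ : 0 ≤ cos θ :=
      cos_nonneg_of_mem_Icc ⟨by linarith [hθ.1, pi_pos], by linarith [hθ.2, pi_pos]⟩
    have hc₁ : cos θ < 1 := by nlinarith [sin_sq_add_cos_sq θ]
    have hC_le : C * sin θ ≤ max C K * sin θ := by gcongr; exact le_max_left _ _
    rcases (show j ≤ m ∨ j = m + 1 by rw [mem_Icc] at hj; omega) with hjm | rfl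
    · obtain ⟨hpos, hle⟩ := hCθ j (mem_Icc.2 ⟨(mem_Icc.1 hj).1, hjm⟩)
      exact ⟨hpos, hle.trans hC_le⟩
    · have hstep := mul_pow_sub_cos_mul_prod_div_mem_Ioc (Icc 1 m) (g · θ) hε hL hs hc₀ hc₁
        (fun j hj ↦ (abs_of_pos (hCθ j hj).1).trans_le (hCθ j hj).2) hCs.le
      rw [Nat.card_Icc, Nat.add_sub_cancel] at hstep
      rw [hg m θ hθ fun j hj ↦ ⟨(hCθ j hj).1, (hCθ j hj).2.trans_lt hCs⟩]
      exact ⟨hstep.1, hstep.2.trans (by gcongr; exact le_max_right _ _)⟩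

end Gamma

theorem gamma_sequence_tendsto_zero_general
    (L ε : ℝ) (hL0 : 0 < L) (hε : 0 < ε)
    (g : ℕ → ℝ → ℝ)
    (h1 : ∀ θ ∈ Set.Ioc 0 (π / 4),
      g 1 θ = (1 + ε) * (1 - Real.cos θ) / (L * Real.sin θ))
    (hrec : ∀ n, 2 ≤ n → ∀ θ ∈ Set.Ioc 0 (π / 4),
      (∀ j, 1 ≤ j → j < n → g j θ ∈ Set.Ioo (0 : ℝ) 1) →
      g n θ = (1 + ε) *
        ((2 : ℝ) ^ (n - 1) -
          Real.cos θ * ∏ j ∈ Finset.Icc 1 (n - 1), (1 + Real.sqrt (1 - g j θ ^ 2))) /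
        (L * Real.sin θ)) :
    ∀ n, 1 ≤ n → Tendsto (g n) (nhdsWithin 0 (Set.Ioi 0)) (nhds 0) := by
  intro n hn
  obtain ⟨C, hC⟩ := exists_forall_eventually_gamma_mem_Ioc hL0 (by linarith)
    (gamma_succ_eq h1 hrec) n
  have hbound : ∀ᶠ θ in 𝓝[>] 0, g n θ ∈ Set.Ioc 0 (C * sin θ) :=
    hC.mono fun θ hθ ↦ hθ n (mem_Icc.2 ⟨hn, le_rfl⟩)
  exact squeeze_zero' (hbound.mono fun θ hθ ↦ hθ.1.le) (hbound.mono fun θ hθ ↦ hθ.2)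
    (tendsto_const_mul_sin_nhdsGT_zero C)

/-- For the family `γ_n(θ)` defined recursively by
`γ₁(θ) = (1+ε)(1-cos θ)/(L sin θ)` and, whenever all previous terms lie in `(0,1)`,
`γ_n(θ) = (1+ε)(2^{n-1} - cos θ ∏_{j=1}^{n-1}(1+√(1-γ_j(θ)²)))/(L sin θ)`,
every `γ_n` tends to `0` as `θ → 0⁺`. -/
theorem gamma_sequence_tendsto_zero
    (L ε : ℝ) (hL0 : 0 < L) (hL1 : L ≤ 1) (hε : 0 < ε)
    (g : ℕ → ℝ → ℝ)
    (h1 : ∀ θ ∈ Set.Ioc 0 (π / 4),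
      g 1 θ = (1 + ε) * (1 - Real.cos θ) / (L * Real.sin θ))
    (hrec : ∀ n, 2 ≤ n → ∀ θ ∈ Set.Ioc 0 (π / 4),
      (∀ j, 1 ≤ j → j < n → g j θ ∈ Set.Ioo (0 : ℝ) 1) →
      g n θ = (1 + ε) *
        ((2 : ℝ) ^ (n - 1) -
          Real.cos θ * ∏ j ∈ Finset.Icc 1 (n - 1), (1 + Real.sqrt (1 - g j θ ^ 2))) /
        (L * Real.sin θ)) :
    ∀ n, 1 ≤ n → Tendsto (g n) (nhdsWithin 0 (Set.Ioi 0)) (nhds 0) :=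
  gamma_sequence_tendsto_zero_general L ε hL0 hε g h1 hrec
end

section
/- Let ε > 0 and α satisfy sin²(2α) = 8/9, and define γ₁(θ) = (1+ε)(2/(sin 2α (cos θ + sin θ)) - 1) and γ₂(θ) = (1+ε)(4/(sin 2α (cos θ + sin θ)) - (1+√(1-γ₁(θ)²))) when γ₁(θ) ∈ (0,1). Then for all θ ∈ (0, π/4], γ₁(θ) ≥ 1/2, and consequently γ₂(θ) > 2γ₁(θ) ≥ 1, so γ₂(θ) ∉ (0,1). -/
open Real

/-!
With `x = sin 2α (cos θ + sin θ)`, the two sharpnesses are `γ₁ = (1+ε)(2/x - 1)` and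
`γ₂ = (1+ε)(4/x - 1 - √(1-γ₁²))`. Since `sin 2α = 2√2/3` and `1 ≤ cos θ + sin θ ≤ √2` on
`[0, π/2]`, we have `0 < x ≤ 4/3`, so `2/x - 1 ≥ 1/2` and `γ₁ ≥ 1/2`. Moreover
`γ₂ - 2γ₁ = (1+ε)(1 - √(1-γ₁²)) > 0` as soon as `γ₁ ≠ 0`, whence `γ₂ > 2γ₁ ≥ 1`.
-/

noncomputable def firstSharpness (ε x : ℝ) : ℝ := (1 + ε) * (2 / x - 1)

noncomputable def secondSharpness (ε x : ℝ) : ℝ :=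
  (1 + ε) * (4 / x - (1 + √(1 - firstSharpness ε x ^ 2)))

lemma one_le_cos_add_sin {θ : ℝ} (hθ : θ ∈ Set.Icc 0 (π / 2)) : 1 ≤ cos θ + sin θ := by
  have hc : 0 ≤ cos θ := cos_nonneg_of_mem_Icc ⟨by linarith [hθ.1, pi_pos], hθ.2⟩
  have hs : 0 ≤ sin θ := sin_nonneg_of_nonneg_of_le_pi hθ.1 (by linarith [hθ.2, pi_pos])
  nlinarith [sin_sq_add_cos_sq θ, mul_nonneg hc hs]

lemma cos_add_sin_sq_le_two (θ : ℝ) : (cos θ + sin θ) ^ 2 ≤ 2 := by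
  nlinarith [sin_sq_add_cos_sq θ, sq_nonneg (cos θ - sin θ)]

lemma half_le_firstSharpness {ε x : ℝ} (hε : 0 ≤ ε) (hx : 0 < x) (hx' : x ≤ 4 / 3) :
    1 / 2 ≤ firstSharpness ε x := by
  have : 3 / 2 ≤ 2 / x := by rw [le_div_iff₀ hx]; linarith
  unfold firstSharpness
  nlinarith

lemma two_mul_firstSharpness_lt_secondSharpness {ε x : ℝ} (hε : -1 < ε)
    (hγ : firstSharpness ε x ≠ 0) : 2 * firstSharpness ε x < secondSharpness ε x := by
  have hsqrt : √(1 - firstSharpness ε x ^ 2) < 1 := by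
    rw [sqrt_lt' one_pos]
    linarith [pow_pos (abs_pos.mpr hγ) 2, sq_abs (firstSharpness ε x)]
  have hdiff : secondSharpness ε x - 2 * firstSharpness ε x =
      (1 + ε) * (1 - √(1 - firstSharpness ε x ^ 2)) := by
    unfold secondSharpness firstSharpness; ring
  nlinarith

/-- For `ε > 0` and `sin²(2α) = 8/9` (with `sin 2α > 0`), the first Svetlichny
sharpness `γ₁(θ) = (1+ε)(2/(sin 2α (cos θ + sin θ)) - 1)` satisfies `γ₁(θ) ≥ 1/2`
for all `θ ∈ (0, π/4]`; consequently, if `γ₁(θ) ∈ (0,1)` then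
`γ₂(θ) = (1+ε)(4/(sin 2α (cos θ + sin θ)) - (1+√(1-γ₁(θ)²)))` satisfies
`γ₂(θ) > 2γ₁(θ) ≥ 1`, so `γ₂(θ) ∉ (0,1)`. -/
theorem second_charlie_fails_at_eight_ninths
    (ε α : ℝ) (hε : 0 < ε)
    (hsin : Real.sin (2 * α) ^ 2 = 8 / 9) (hpos : 0 < Real.sin (2 * α)) :
    ∀ θ ∈ Set.Ioc (0 : ℝ) (π / 4),
      (1 / 2 : ℝ) ≤ (1 + ε) * (2 / (Real.sin (2 * α) * (Real.cos θ + Real.sin θ)) - 1) ∧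
      ((1 + ε) * (2 / (Real.sin (2 * α) * (Real.cos θ + Real.sin θ)) - 1)
          ∈ Set.Ioo (0 : ℝ) 1 →
        (1 + ε) * (4 / (Real.sin (2 * α) * (Real.cos θ + Real.sin θ)) -
            (1 + Real.sqrt (1 -
              ((1 + ε) * (2 / (Real.sin (2 * α) * (Real.cos θ + Real.sin θ)) - 1)) ^ 2)))
          > 2 * ((1 + ε) * (2 / (Real.sin (2 * α) * (Real.cos θ + Real.sin θ)) - 1)) ∧
        (1 + ε) * (4 / (Real.sin (2 * α) * (Real.cos θ + Real.sin θ)) -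
            (1 + Real.sqrt (1 -
              ((1 + ε) * (2 / (Real.sin (2 * α) * (Real.cos θ + Real.sin θ)) - 1)) ^ 2)))
          ∉ Set.Ioo (0 : ℝ) 1) := by
  intro θ hθ
  change 1 / 2 ≤ firstSharpness ε _ ∧ (firstSharpness ε _ ∈ Set.Ioo 0 1 →
    2 * firstSharpness ε _ < secondSharpness ε _ ∧ secondSharpness ε _ ∉ Set.Ioo 0 1)
  set x := sin (2 * α) * (cos θ + sin θ)
  have hp : 1 ≤ cos θ + sin θ :=
    one_le_cos_add_sin ⟨hθ.1.le, hθ.2.trans (by linarith [pi_pos])⟩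
  have hx : 0 < x := mul_pos hpos (by linarith)
  have hx' : x ≤ 4 / 3 := by
    nlinarith [cos_add_sin_sq_le_two θ, mul_pos hpos (show 0 < cos θ + sin θ by linarith)]
  have hhalf := half_le_firstSharpness hε.le hx hx'
  refine ⟨hhalf, fun hγ => ?_⟩
  have hlt := two_mul_firstSharpness_lt_secondSharpness (x := x) (by linarith) hγ.1.ne'
  exact ⟨hlt, fun h => by linarith [h.2]⟩
end

section
/- If γ_{j-1}, γ_j ∈ (0,1) satisfy the Svetlichny recursion γ_j = (1+ε)(2^j/c - ∏_{i=1}^{j-1}(1+√(1-γ_i²))) with c = sin 2α (cos θ + sin θ) > 0 and ε > 0, and each factor satisfies 1 < 1+√(1-γ_i²) < 2, then γ_j/γ_{j-1} > 2. -/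
open Finset

/-! Doubling `γ_{j-1}` doubles both `2^{j-1}/c` and the product `P = ∏_{i<j-1}`, whereas
`γ_j` multiplies `P` only by the factor `1 + √(1-γ_{j-1}²) < 2`; hence
`γ_j - 2 γ_{j-1} = (1+ε) P (2 - (1 + √(1-γ_{j-1}²))) > 0`. -/

theorem two_mul_lt_of_eq_mul_two_pow_div_sub_prod {g y : ℕ → ℝ} {K c : ℝ} {n : ℕ}
    (hK : 0 < K) (hg : ∀ i ∈ Icc 1 n, 0 < g i) (hlast : g (n + 1) < 2)
    (hy₁ : y (n + 1) = K * (2 ^ (n + 1) / c - ∏ i ∈ Icc 1 n, g i))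
    (hy₂ : y (n + 2) = K * (2 ^ (n + 2) / c - ∏ i ∈ Icc 1 (n + 1), g i)) :
    2 * y (n + 1) < y (n + 2) := by
  have hprod : 0 < ∏ i ∈ Icc 1 n, g i := prod_pos hg
  have hgap : 0 < K * (∏ i ∈ Icc 1 n, g i) * (2 - g (n + 1)) :=
    mul_pos (mul_pos hK hprod) (sub_pos.2 hlast)
  rw [hy₁, hy₂, prod_Icc_succ_top (by omega), pow_succ 2 (n + 1)]
  linear_combination hgap

theorem svetlichny_ratio_gt_two_general
    (ε c : ℝ) (hε : 0 < ε)
    (γ : ℕ → ℝ) (j : ℕ) (hj : 2 ≤ j)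
    (hprev : γ (j - 1) ∈ Set.Ioo (0 : ℝ) 1)
    (hrecj : γ j = (1 + ε) * ((2 : ℝ) ^ j / c -
      ∏ i ∈ Finset.Icc 1 (j - 1), (1 + Real.sqrt (1 - γ i ^ 2))))
    (hrecj1 : γ (j - 1) = (1 + ε) * ((2 : ℝ) ^ (j - 1) / c -
      ∏ i ∈ Finset.Icc 1 (j - 2), (1 + Real.sqrt (1 - γ i ^ 2))))
    (hfac : ∀ i, 1 ≤ i → i ≤ j - 1 →
      1 < 1 + Real.sqrt (1 - γ i ^ 2) ∧ 1 + Real.sqrt (1 - γ i ^ 2) < 2) :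
    γ j / γ (j - 1) > 2 := by
  obtain ⟨n, rfl⟩ : ∃ n, j = n + 2 := ⟨j - 2, by omega⟩
  simp only [Nat.reduceSubDiff, Nat.add_sub_cancel] at hprev hrecj hrecj1 hfac ⊢
  have hdouble : 2 * γ (n + 1) < γ (n + 2) :=
    two_mul_lt_of_eq_mul_two_pow_div_sub_prod (by linarith)
      (fun i hi ↦ by
        obtain ⟨hi₁, hin⟩ := mem_Icc.1 hi
        linarith [(hfac i hi₁ (by omega)).1])
      (hfac (n + 1) (by omega) le_rfl).2 hrecj1 hrecj
  exact (lt_div_iff₀ hprev.1).2 hdouble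

/-- If `γ_{j-1}, γ_j ∈ (0,1)` satisfy the Svetlichny recursion
`γ_m = (1+ε)(2^m/c - ∏_{i=1}^{m-1}(1+√(1-γ_i²)))` with
`c = sin 2α (cos θ + sin θ) > 0`, `ε > 0`, and each factor satisfies
`1 < 1+√(1-γ_i²) < 2`, then `γ_j/γ_{j-1} > 2`. -/
theorem svetlichny_ratio_gt_two
    (ε α θ c : ℝ) (hε : 0 < ε)
    (hc : c = Real.sin (2 * α) * (Real.cos θ + Real.sin θ)) (hcpos : 0 < c)
    (γ : ℕ → ℝ) (j : ℕ) (hj : 2 ≤ j)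
    (hprev : γ (j - 1) ∈ Set.Ioo (0 : ℝ) 1) (hcur : γ j ∈ Set.Ioo (0 : ℝ) 1)
    (hrecj : γ j = (1 + ε) * ((2 : ℝ) ^ j / c -
      ∏ i ∈ Finset.Icc 1 (j - 1), (1 + Real.sqrt (1 - γ i ^ 2))))
    (hrecj1 : γ (j - 1) = (1 + ε) * ((2 : ℝ) ^ (j - 1) / c -
      ∏ i ∈ Finset.Icc 1 (j - 2), (1 + Real.sqrt (1 - γ i ^ 2))))
    (hfac : ∀ i, 1 ≤ i → i ≤ j - 1 →
      1 < 1 + Real.sqrt (1 - γ i ^ 2) ∧ 1 + Real.sqrt (1 - γ i ^ 2) < 2) :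
    γ j / γ (j - 1) > 2 :=
  svetlichny_ratio_gt_two_general ε c hε γ j hj hprev hrecj hrecj1 hfac
end
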